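/- Let n ≥ 3 and for i ≥ 1 let Q_i ⊂ ℝ^{n-1} be a rectangle with one edge of length r_i ∈ (0, 1/2) and the other n−2 edges of length √2 · r_i². Let W_i ⊂ ℝⁿ be the rotationally symmetric annular region around the axis J_i of the cylinder over Q_i, between radii r_i² and r_i, and define u_i(x) = (log(1/d(x,J_i)) − log(1/r_i)) / (log(1/r_i²) − log(1/r_i)) on W_i, extended by 1 inside and 0 outside. Then ∫ |∇u_i|^{n-1} (log(e + |∇u_i|))^λ dx ≤ C r_i (log(1/r_i))^{λ-(n-2)} for a constant C = C(n, λ). -/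

import Mathlib

/-!
Let `d` be the distance to the segment `J` and `L = log (1/r)`. On the annulus `r² < d < r` the
cut-off equals `log (d/r) / log r`, so wherever it is differentiable its gradient has norm
`1 / (d L)`, because the distance function has unit gradient; elsewhere the gradient vanishes, up to
the null sets `J`, `{d = r²}`, `{d = r}` (the level sets of the convex function `d` lie in frontiers
of convex sets). On the annulus `log (e + |∇u|)` is comparable to `L`, so the energy density is at
most `C L^(λ-(n-1)) d^(1-n)`. The sublevel set `{d ≤ τ}` lies in a box of volume `≲ r τ^(n-1)`, so
each of the `≲ L` dyadic shells `τ/2 < d ≤ τ` between `r²` and `r` contributes `O(r)` to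
`∫ d^(1-n)`, and the total is `O(r L^(λ-(n-2)))`.
-/

open MeasureTheory Metric Set Filter Topology

namespace Real

lemma log_le_half_self {x : ℝ} (hx : 0 < x) : log x ≤ x / 2 :=
  (log_le_iff_le_exp hx).2 <| by nlinarith [quadratic_le_exp_of_nonneg (x := x / 2) (by positivity)]

lemma rpow_le_abs_rpow_mul {A c y : ℝ} (lam : ℝ) (hA : 0 < A) (hc : 1 ≤ c) (hlo : A / c ≤ y)
    (hhi : y ≤ c * A) : y ^ lam ≤ c ^ |lam| * A ^ lam := by
  have hc0 : 0 < c := by linarith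
  rcases le_or_gt 0 lam with hlam | hlam
  · calc y ^ lam ≤ (c * A) ^ lam := by gcongr; exact (by positivity : 0 < A / c).le.trans hlo
      _ = c ^ |lam| * A ^ lam := by rw [abs_of_nonneg hlam, mul_rpow hc0.le hA.le]
  · calc y ^ lam ≤ (A / c) ^ lam := rpow_le_rpow_of_nonpos (by positivity) hlo hlam.le
      _ = c ^ |lam| * A ^ lam := by
        rw [abs_of_neg hlam, div_rpow hA.le hc0.le, rpow_neg hc0.le]; ring

end Real

theorem integral_le_of_lintegral_enorm_le {α : Type*} [MeasurableSpace α] {μ : Measure α}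
    {f : α → ℝ} {c : ℝ} (hc : 0 ≤ c) (h : ∫⁻ x, ‖f x‖ₑ ∂μ ≤ ENNReal.ofReal c) :
    ∫ x, f x ∂μ ≤ c := by
  have h' := (enorm_integral_le_lintegral_enorm f).trans h
  rw [← ofReal_norm, ENNReal.ofReal_le_ofReal_iff hc, Real.norm_eq_abs] at h'
  exact (le_abs_self _).trans h'

lemma setLIntegral_dyadicShell_inv_rpow_le {α : Type*} [MeasurableSpace α] {μ : Measure α}
    {d : α → ℝ} {p M b : ℝ} (hp : 0 ≤ p) (hb : 0 < b)
    (hvol : μ {x | d x ≤ b} ≤ ENNReal.ofReal (M * b ^ p)) :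
    ∫⁻ x in {x | b / 2 < d x ∧ d x ≤ b}, ENNReal.ofReal (d x ^ p)⁻¹ ∂μ
      ≤ ENNReal.ofReal (2 ^ p * M) :=
  calc ∫⁻ x in {x | b / 2 < d x ∧ d x ≤ b}, ENNReal.ofReal (d x ^ p)⁻¹ ∂μ
      ≤ ∫⁻ _ in {x | b / 2 < d x ∧ d x ≤ b}, ENNReal.ofReal ((b / 2) ^ p)⁻¹ ∂μ :=
        setLIntegral_mono measurable_const fun x hx => ENNReal.ofReal_le_ofReal <|
          inv_anti₀ (by positivity) (Real.rpow_le_rpow (by positivity) hx.1.le hp)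
    _ = ENNReal.ofReal ((b / 2) ^ p)⁻¹ * μ {x | b / 2 < d x ∧ d x ≤ b} := setLIntegral_const _ _
    _ ≤ ENNReal.ofReal ((b / 2) ^ p)⁻¹ * ENNReal.ofReal (M * b ^ p) :=
        mul_le_mul_right ((measure_mono fun x hx => hx.2).trans hvol) _
    _ = ENNReal.ofReal (2 ^ p * M) := by
        rw [← ENNReal.ofReal_mul (by positivity), Real.div_rpow hb.le zero_le_two]
        congr 1
        field_simp

/-- Dyadic layer estimate: if the sublevel sets of `d` have measure `≤ M τ ^ p`, then each shell
`b / 2 ^ (k + 1) < d ≤ b / 2 ^ k` contributes at most `2 ^ p M` to `∫ d ^ (-p)`. -/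
theorem setLIntegral_inv_rpow_le_of_measure_le {α : Type*} [MeasurableSpace α] {μ : Measure α}
    {d : α → ℝ} {p M c : ℝ} (hp : 0 ≤ p) (hM : 0 ≤ M) (hc : 0 < c) (N : ℕ) (b : ℝ)
    (hvol : ∀ τ, 0 < τ → τ ≤ b → μ {x | d x ≤ τ} ≤ ENNReal.ofReal (M * τ ^ p))
    (hN : b ≤ 2 ^ N * c) :
    ∫⁻ x in {x | c < d x ∧ d x ≤ b}, ENNReal.ofReal (d x ^ p)⁻¹ ∂μ
      ≤ ENNReal.ofReal (N * 2 ^ p * M) := by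
  have hempty : ∀ b ≤ c, ∫⁻ x in {x | c < d x ∧ d x ≤ b}, ENNReal.ofReal (d x ^ p)⁻¹ ∂μ = 0 :=
    fun b hbc => by
      rw [eq_empty_of_forall_notMem (s := {x | c < d x ∧ d x ≤ b})
        fun x hx => by linarith [hx.1, hx.2]]
      simp
  induction N generalizing b with
  | zero => simp [hempty b (by simpa using hN)]
  | succ N ih =>
    rcases le_or_gt b c with hbc | hbc
    · simp [hempty b hbc]
    have hb : 0 < b := hc.trans hbc
    have hsplit : {x | c < d x ∧ d x ≤ b}
        ⊆ {x | c < d x ∧ d x ≤ b / 2} ∪ {x | b / 2 < d x ∧ d x ≤ b} := by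
      intro x hx
      rcases le_or_gt (d x) (b / 2) with h | h
      exacts [Or.inl ⟨hx.1, h⟩, Or.inr ⟨h, hx.2⟩]
    calc ∫⁻ x in {x | c < d x ∧ d x ≤ b}, ENNReal.ofReal (d x ^ p)⁻¹ ∂μ
        ≤ ∫⁻ x in {x | c < d x ∧ d x ≤ b / 2}, ENNReal.ofReal (d x ^ p)⁻¹ ∂μ
          + ∫⁻ x in {x | b / 2 < d x ∧ d x ≤ b}, ENNReal.ofReal (d x ^ p)⁻¹ ∂μ :=
          (lintegral_mono_set hsplit).trans (lintegral_union_le _ _ _)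
      _ ≤ ENNReal.ofReal (N * 2 ^ p * M) + ENNReal.ofReal (2 ^ p * M) := by
          refine add_le_add (ih (b / 2) (fun τ hτ hτb => hvol τ hτ (by linarith)) ?_)
            (setLIntegral_dyadicShell_inv_rpow_le hp hb (hvol b hb le_rfl))
          rw [pow_succ] at hN
          linarith
      _ = ENNReal.ofReal ((N + 1 : ℕ) * 2 ^ p * M) := by
          rw [← ENNReal.ofReal_add (by positivity) (by positivity)]
          push_cast; ring_nf

lemma eventually_infDist_mem_Ioo {α : Type*} [PseudoMetricSpace α] {s : Set α} {x : α}
    {t₁ t₂ : ℝ} (h₁ : t₁ < infDist x s) (h₂ : infDist x s < t₂) :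
    ∀ᶠ y in 𝓝 x, infDist y s ∈ Ioo t₁ t₂ :=
  (continuous_infDist_pt s).continuousAt.eventually (Ioo_mem_nhds h₁ h₂)

section infDist

variable {E : Type*} [NormedAddCommGroup E] [NormedSpace ℝ E] [ProperSpace E] {s : Set E}

/-- Towards a nearest point of `closure s` the distance to `s` drops at unit rate, which bounds
`‖fderiv‖` from below; `1`-Lipschitz continuity bounds it from above. -/
theorem norm_fderiv_infDist_eq_one {x : E} (hx : 0 < infDist x s)
    (hd : DifferentiableAt ℝ (infDist · s) x) : ‖fderiv ℝ (infDist · s) x‖ = 1 := by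
  have hs : s.Nonempty := by
    by_contra h
    simp [not_nonempty_iff_eq_empty.1 h] at hx
  obtain ⟨p, hp, hxp⟩ := exists_mem_closure_infDist_eq_dist hs x
  set t := infDist x s
  set v := p - x
  have hv : ‖v‖ = t := by rw [hxp, dist_comm, dist_eq_norm]
  have hline : ∀ θ ∈ Icc (0 : ℝ) 1, infDist (x + θ • v) s = (1 - θ) * t := by
    rintro θ ⟨hθ0, hθ1⟩
    refine le_antisymm ?_ ?_
    · calc infDist (x + θ • v) s = infDist (x + θ • v) (closure s) := infDist_closure.symm
        _ ≤ dist (x + θ • v) p := infDist_le_dist_of_mem hp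
        _ = ‖(1 - θ) • v‖ := by rw [dist_comm, dist_eq_norm]; congr 1; simp only [v]; module
        _ = (1 - θ) * t := by rw [norm_smul, Real.norm_of_nonneg (by linarith), hv]
    · have h := infDist_le_infDist_add_dist (s := s) (x := x) (y := x + θ • v)
      rw [dist_self_add_right, norm_smul, Real.norm_of_nonneg hθ0, hv] at h
      linarith
  have hD : HasDerivWithinAt (fun θ : ℝ => infDist (x + θ • v) s)
      (fderiv ℝ (infDist · s) x v) (Ici 0) 0 := by
    have hlin : HasDerivAt (fun θ : ℝ => x + θ • v) v 0 := by
      simpa using ((hasDerivAt_id (0 : ℝ)).smul_const v).const_add x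
    exact (HasFDerivAt.comp_hasDerivAt (f := fun θ : ℝ => x + θ • v) (0 : ℝ)
      (by simpa using hd.hasFDerivAt) hlin).hasDerivWithinAt
  have hD' : HasDerivWithinAt (fun θ : ℝ => infDist (x + θ • v) s) (-t) (Ici 0) 0 := by
    have hlin : HasDerivWithinAt (fun θ : ℝ => (1 - θ) * t) (-t) (Ici 0) 0 := by
      simpa using (((hasDerivAt_id (0 : ℝ)).const_sub 1).mul_const t).hasDerivWithinAt
    refine hlin.congr_of_eventuallyEq ?_ (by simpa using hline 0 (by simp))
    filter_upwards [Icc_mem_nhdsGE (zero_lt_one' ℝ)] with θ hθ using hline θ hθ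
  have hDv : fderiv ℝ (infDist · s) x v = -t := (uniqueDiffWithinAt_Ici 0).eq_deriv _ hD hD'
  refine le_antisymm (by simpa using norm_fderiv_le_of_lipschitz ℝ (lipschitz_infDist_pt s)) ?_
  have h := (fderiv ℝ (infDist · s) x).le_opNorm v
  rw [hDv, norm_neg, hv, Real.norm_of_nonneg hx.le] at h
  nlinarith

theorem convexOn_infDist (hs : Convex ℝ s) : ConvexOn ℝ univ (infDist · s) := by
  refine ⟨convex_univ, fun x _ y _ a b ha hb hab => ?_⟩
  rcases s.eq_empty_or_nonempty with rfl | hne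
  · simp
  obtain ⟨p, hp, hxp⟩ := exists_mem_closure_infDist_eq_dist hne x
  obtain ⟨q, hq, hyq⟩ := exists_mem_closure_infDist_eq_dist hne y
  calc infDist (a • x + b • y) s = infDist (a • x + b • y) (closure s) := infDist_closure.symm
    _ ≤ dist (a • x + b • y) (a • p + b • q) :=
        infDist_le_dist_of_mem (hs.closure hp hq ha hb hab)
    _ = ‖a • (x - p) + b • (y - q)‖ := by rw [dist_eq_norm]; congr 1; module
    _ ≤ a * dist x p + b * dist y q := by
        refine (norm_add_le _ _).trans_eq ?_
        rw [norm_smul, norm_smul, Real.norm_of_nonneg ha, Real.norm_of_nonneg hb,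
          dist_eq_norm, dist_eq_norm]
    _ = a • infDist x s + b • infDist y s := by rw [hxp, hyq, smul_eq_mul, smul_eq_mul]

end infDist

theorem ConvexOn.setOf_eq_subset_frontier {E : Type*} [AddCommGroup E] [Module ℝ E]
    [TopologicalSpace E] [IsTopologicalAddGroup E] [ContinuousSMul ℝ E] {f : E → ℝ}
    (hf : ConvexOn ℝ univ f) {p : E} {t : ℝ} (hp : f p < t) :
    {x | f x = t} ⊆ frontier {x | f x ≤ t} := by
  intro x (hx : f x = t)
  refine ⟨subset_closure hx.le, fun hint => ?_⟩
  have hray : Tendsto (fun ε : ℝ => x + ε • (x - p)) (𝓝[>] 0) (𝓝 x) := by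
    have : Continuous (fun ε : ℝ => x + ε • (x - p)) := by fun_prop
    exact (this.tendsto' 0 x (by simp)).mono_left nhdsWithin_le_nhds
  obtain ⟨ε, hyt, hε⟩ :=
    ((hray.eventually (isOpen_interior.mem_nhds hint)).and self_mem_nhdsWithin).exists
  have hyt : f (x + ε • (x - p)) ≤ t := interior_subset (s := {x | f x ≤ t}) hyt
  have hε : (0 : ℝ) < ε := hε
  have hcomb : x = (1 + ε)⁻¹ • (x + ε • (x - p)) + (ε * (1 + ε)⁻¹) • p := by
    match_scalars
    · field_simp
    · ring
  have hconv : f ((1 + ε)⁻¹ • (x + ε • (x - p)) + (ε * (1 + ε)⁻¹) • p) ≤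
      (1 + ε)⁻¹ • f (x + ε • (x - p)) + (ε * (1 + ε)⁻¹) • f p :=
    hf.2 (mem_univ _) (mem_univ _) (by positivity) (by positivity) (by field_simp)
  rw [← hcomb, hx, smul_eq_mul, smul_eq_mul] at hconv
  field_simp at hconv
  nlinarith

theorem Convex.addHaar_setOf_infDist_eq {E : Type*} [NormedAddCommGroup E] [NormedSpace ℝ E]
    [MeasurableSpace E] [BorelSpace E] [FiniteDimensional ℝ E] (μ : Measure E)
    [μ.IsAddHaarMeasure] {s : Set E} (hs : Convex ℝ s) {t : ℝ} (ht : 0 < t) :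
    μ {x | infDist x s = t} = 0 := by
  rcases s.eq_empty_or_nonempty with rfl | ⟨p, hp⟩
  · simp [ht.ne]
  refine measure_mono_null ((convexOn_infDist hs).setOf_eq_subset_frontier
    (by rwa [infDist_zero_of_mem hp])) ?_
  simpa using ((convexOn_infDist hs).convex_le t).addHaar_frontier μ

/-- Equal to `1` at `t = a` and to `0` at `t = b`; the paper's `u_i` is `logProfile r² r` of the
distance, clamped to `[0, 1]`. -/
noncomputable def logProfile (a b t : ℝ) : ℝ :=
  (Real.log (1 / t) - Real.log (1 / b)) / (Real.log (1 / a) - Real.log (1 / b))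

section logProfile

variable {a b t : ℝ}

lemma log_inv_sub_log_inv_pos (ha : 0 < a) (hab : a < b) :
    0 < Real.log (1 / a) - Real.log (1 / b) := by
  simp only [one_div, Real.log_inv]
  linarith [Real.log_lt_log ha hab]

lemma one_le_logProfile (ht : 0 < t) (hta : t ≤ a) (hab : a < b) : 1 ≤ logProfile a b t := by
  have hℓ := log_inv_sub_log_inv_pos (ht.trans_le hta) hab
  rw [logProfile, one_le_div hℓ]
  simp only [one_div, Real.log_inv]
  linarith [Real.log_le_log ht hta]

lemma logProfile_nonpos (ha : 0 < a) (hab : a < b) (hbt : b ≤ t) : logProfile a b t ≤ 0 := by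
  refine div_nonpos_of_nonpos_of_nonneg ?_ (log_inv_sub_log_inv_pos ha hab).le
  simp only [one_div, Real.log_inv]
  linarith [Real.log_le_log (ha.trans hab) hbt]

lemma logProfile_mem_Icc (ha : 0 < a) (hab : a < b) (hat : a ≤ t) (htb : t ≤ b) :
    logProfile a b t ∈ Icc 0 1 := by
  have hℓ := log_inv_sub_log_inv_pos ha hab
  have ht : 0 < t := ha.trans_le hat
  rw [logProfile, mem_Icc, div_le_one hℓ]
  refine ⟨div_nonneg ?_ hℓ.le, ?_⟩ <;> simp only [one_div, Real.log_inv]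
  · linarith [Real.log_le_log ht htb]
  · linarith [Real.log_le_log ha hat]

lemma hasDerivAt_logProfile (ht : 0 < t) :
    HasDerivAt (logProfile a b) (-(t * (Real.log (1 / a) - Real.log (1 / b)))⁻¹) t := by
  have hP : logProfile a b =
      fun s => (-Real.log s - Real.log (1 / b)) / (Real.log (1 / a) - Real.log (1 / b)) := by
    ext s; simp only [logProfile, one_div s, Real.log_inv]
  rw [hP, mul_inv, ← neg_mul, ← div_eq_mul_inv]
  exact ((Real.hasDerivAt_log ht.ne').neg.sub_const _).div_const _

lemma exp_logProfile (ht : 0 < t) (hℓ : Real.log (1 / a) - Real.log (1 / b) ≠ 0) :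
    Real.exp (-((Real.log (1 / a) - Real.log (1 / b)) * logProfile a b t + Real.log (1 / b)))
      = t := by
  rw [logProfile, mul_div_cancel₀ _ hℓ, one_div, Real.log_inv]
  simp [Real.exp_log ht]

end logProfile

noncomputable def logCutoff {E : Type*} [PseudoMetricSpace E] (s : Set E) (a b : ℝ) (y : E) : ℝ :=
  min 1 (max 0 (logProfile a b (infDist y s)))

section logCutoff

variable {E : Type*} [NormedAddCommGroup E] [NormedSpace ℝ E] {s : Set E} {a b : ℝ} {x : E}

lemma fderiv_logCutoff_of_lt (hab : a < b) (hx0 : 0 < infDist x s) (hxa : infDist x s < a) :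
    fderiv ℝ (logCutoff s a b) x = 0 := by
  have hU : logCutoff s a b =ᶠ[𝓝 x] fun _ => 1 := by
    filter_upwards [eventually_infDist_mem_Ioo hx0 hxa] with y hy
    simp [logCutoff, one_le_logProfile hy.1 hy.2.le hab]
  simp [hU.fderiv_eq]

lemma fderiv_logCutoff_of_gt (ha : 0 < a) (hab : a < b) (hxb : b < infDist x s) :
    fderiv ℝ (logCutoff s a b) x = 0 := by
  have hU : logCutoff s a b =ᶠ[𝓝 x] fun _ => 0 := by
    filter_upwards [eventually_infDist_mem_Ioo hxb (lt_add_one _)] with y hy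
    simp [logCutoff, logProfile_nonpos ha hab hy.1.le]
  simp [hU.fderiv_eq]

/-- Between the radii the cut-off is `logProfile ∘ infDist`, and `infDist` is recovered from it by
exponentiating; so `infDist` is differentiable wherever the cut-off is, and the chain rule with
`‖fderiv infDist‖ = 1` gives the gradient. -/
theorem norm_fderiv_logCutoff [ProperSpace E] (ha : 0 < a) (hab : a < b) (hxa : a < infDist x s)
    (hxb : infDist x s < b) (hU : DifferentiableAt ℝ (logCutoff s a b) x) :
    ‖fderiv ℝ (logCutoff s a b) x‖
      = (infDist x s * (Real.log (1 / a) - Real.log (1 / b)))⁻¹ := by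
  set ℓ := Real.log (1 / a) - Real.log (1 / b)
  have hℓ : 0 < ℓ := log_inv_sub_log_inv_pos ha hab
  have hx0 : 0 < infDist x s := ha.trans hxa
  have hUd : logCutoff s a b =ᶠ[𝓝 x] logProfile a b ∘ (infDist · s) := by
    filter_upwards [eventually_infDist_mem_Ioo hxa hxb] with y hy
    obtain ⟨h0, h1⟩ := logProfile_mem_Icc ha hab hy.1.le hy.2.le
    simp [logCutoff, h0, h1]
  have hdU : (infDist · s) =ᶠ[𝓝 x]
      fun y => Real.exp (-(ℓ * logCutoff s a b y + Real.log (1 / b))) := by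
    filter_upwards [hUd, eventually_infDist_mem_Ioo hxa hxb] with y hUy hy
    rw [hUy, Function.comp_apply, exp_logProfile (ha.trans hy.1) hℓ.ne']
  have hd : DifferentiableAt ℝ (infDist · s) x :=
    (by fun_prop : DifferentiableAt ℝ
      (fun y => Real.exp (-(ℓ * logCutoff s a b y + Real.log (1 / b)))) x).congr_of_eventuallyEq hdU
  rw [(((hasDerivAt_logProfile hx0).comp_hasFDerivAt x hd.hasFDerivAt).congr_of_eventuallyEq
    hUd).fderiv, norm_smul, norm_fderiv_infDist_eq_one hx0 hd, norm_neg, mul_one,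
    Real.norm_of_nonneg (by positivity)]

end logCutoff

noncomputable def logEnergy (p lam s : ℝ) : ℝ := s ^ p * Real.log (Real.exp 1 + s) ^ lam

section logEnergy

variable {p lam : ℝ}

lemma logEnergy_zero (hp : p ≠ 0) : logEnergy p lam 0 = 0 := by
  simp [logEnergy, Real.zero_rpow hp]

lemma logEnergy_nonneg {s : ℝ} (hs : 0 ≤ s) : 0 ≤ logEnergy p lam s :=
  mul_nonneg (Real.rpow_nonneg hs _) <| Real.rpow_nonneg
    (Real.log_nonneg (by linarith [Real.one_le_exp zero_le_one, Real.exp_zero])) _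

theorem logEnergy_fderiv_logCutoff_le {E : Type*} [NormedAddCommGroup E] [NormedSpace ℝ E]
    [ProperSpace E] {s : Set E} {a b : ℝ} {x : E} (ha : 0 < a) (hab : a < b) (hp : p ≠ 0)
    (hx0 : 0 < infDist x s) (hxa : infDist x s ≠ a) (hxb : infDist x s ≠ b) :
    logEnergy p lam ‖fderiv ℝ (logCutoff s a b) x‖
      ≤ {y | a < infDist y s ∧ infDist y s < b}.indicator
          (fun y => logEnergy p lam (infDist y s * (Real.log (1 / a) - Real.log (1 / b)))⁻¹) x := by
  by_cases hU : DifferentiableAt ℝ (logCutoff s a b) x ∧ a < infDist x s ∧ infDist x s < b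
  · rw [norm_fderiv_logCutoff ha hab hU.2.1 hU.2.2 hU.1,
      indicator_of_mem (show x ∈ {y | a < infDist y s ∧ infDist y s < b} from hU.2)]
  suffices fderiv ℝ (logCutoff s a b) x = 0 by
    rw [this, norm_zero, logEnergy_zero hp]
    refine indicator_nonneg (fun y hy => logEnergy_nonneg ?_) x
    have := log_inv_sub_log_inv_pos ha hab
    have : 0 < infDist y s := ha.trans hy.1
    positivity
  rcases hxa.lt_or_gt with hxa | hxa
  · exact fderiv_logCutoff_of_lt hab hx0 hxa
  rcases hxb.lt_or_gt with hxb | hxb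
  · exact fderiv_zero_of_not_differentiableAt fun hd => hU ⟨hd, hxa, hxb⟩
  · exact fderiv_logCutoff_of_gt ha hab hxb

end logEnergy

section annulus

variable {r t : ℝ}

lemma log_two_le_log_one_div (hr : 0 < r) (hr2 : r < 1 / 2) : Real.log 2 ≤ Real.log (1 / r) :=
  Real.log_le_log (by norm_num) (by rw [le_div_iff₀ hr]; linarith)

lemma log_exp_one_add_inv_mem_Icc (hr : 0 < r) (hr2 : r < 1 / 2) (ht1 : r ^ 2 < t) (ht2 : t < r) :
    Real.log (Real.exp 1 + (t * Real.log (1 / r))⁻¹) ∈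
      Icc (Real.log (1 / r) / 4) (4 * Real.log (1 / r)) := by
  set L := Real.log (1 / r)
  have hL2 := log_two_le_log_one_div hr hr2
  have hlog2 := Real.log_two_gt_d9
  have hL : 0 < L := by linarith
  have ht : 0 < t := lt_trans (by positivity) ht1
  constructor
  · have hlogt : Real.log t ≤ -L := by
      simpa [L, Real.log_inv] using Real.log_le_log ht ht2.le
    calc L / 4 ≤ -Real.log t - Real.log L := by linarith [Real.log_le_half_self hL]
      _ = Real.log (t * L)⁻¹ := by rw [Real.log_inv, Real.log_mul ht.ne' hL.ne']; ring
      _ ≤ _ := Real.log_le_log (by positivity) (by linarith [Real.exp_pos 1])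
  · have hinv : (t * L)⁻¹ ≤ 2 * (1 / r ^ 2) := by
      rw [← one_div, div_le_iff₀ (by positivity)]
      field_simp
      nlinarith
    have hu : 4 < 1 / r ^ 2 := by rw [lt_div_iff₀ (by positivity)]; nlinarith
    calc Real.log (Real.exp 1 + (t * L)⁻¹) ≤ Real.log ((1 / r ^ 2) ^ 2) := by
          refine Real.log_le_log (by positivity) ?_
          nlinarith [Real.exp_one_lt_d9]
      _ = 4 * L := by
          simp only [L, Real.log_pow, one_div, Real.log_inv]
          push_cast; ring

lemma logEnergy_inv_mul_log_le {p lam : ℝ} (hr : 0 < r) (hr2 : r < 1 / 2) (ht1 : r ^ 2 < t)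
    (ht2 : t < r) :
    logEnergy p lam (t * Real.log (1 / r))⁻¹
      ≤ 4 ^ |lam| * Real.log (1 / r) ^ (lam - p) * (t ^ p)⁻¹ := by
  set L := Real.log (1 / r)
  have hL : 0 < L := by linarith [log_two_le_log_one_div hr hr2, Real.log_two_gt_d9]
  have ht : 0 < t := lt_trans (by positivity) ht1
  obtain ⟨hlo, hhi⟩ := log_exp_one_add_inv_mem_Icc hr hr2 ht1 ht2
  have hlog := Real.rpow_le_abs_rpow_mul lam hL (by norm_num) hlo hhi
  rw [logEnergy, Real.inv_rpow (by positivity), Real.mul_rpow ht.le hL.le, Real.rpow_sub hL]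
  calc (t ^ p * L ^ p)⁻¹ * Real.log (Real.exp 1 + (t * L)⁻¹) ^ lam
      ≤ (t ^ p * L ^ p)⁻¹ * (4 ^ |lam| * L ^ lam) := by gcongr
    _ = 4 ^ |lam| * (L ^ lam / L ^ p) * (t ^ p)⁻¹ := by ring

lemma exists_two_pow_mul_sq_ge (hr : 0 < r) (hr2 : r < 1 / 2) :
    ∃ N : ℕ, r ≤ 2 ^ N * r ^ 2 ∧ (N : ℝ) ≤ 2 * Real.log (1 / r) / Real.log 2 := by
  set L := Real.log (1 / r)
  have hL2 := log_two_le_log_one_div hr hr2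
  have hlog2 : 0 < Real.log 2 := by positivity
  refine ⟨⌈L / Real.log 2⌉₊, ?_, ?_⟩
  · have h : L ≤ Real.log (2 ^ ⌈L / Real.log 2⌉₊) := by
      rw [Real.log_pow, ← div_le_iff₀ hlog2]
      exact Nat.le_ceil _
    rw [Real.log_le_log_iff (by positivity) (by positivity), one_div,
      inv_le_iff_one_le_mul₀ hr] at h
    nlinarith
  · have h := Nat.ceil_lt_add_one (div_nonneg (hlog2.le.trans hL2) hlog2.le)
    rw [mul_div_assoc, two_mul]
    linarith [(one_le_div hlog2).2 hL2]

end annulus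

def axialSegment {n : ℕ} (i₀ : Fin n) (r : ℝ) : Set (EuclideanSpace ℝ (Fin n)) :=
  {z | |z i₀| ≤ r / 2 ∧ ∀ i, i ≠ i₀ → z i = 0}

section axialSegment

variable {n : ℕ} {i₀ : Fin n} {r : ℝ}

lemma zero_mem_axialSegment (hr : 0 ≤ r) : 0 ∈ axialSegment i₀ r :=
  ⟨by simpa using div_nonneg hr zero_le_two, fun _ _ => rfl⟩

lemma isClosed_axialSegment : IsClosed (axialSegment i₀ r) := by
  simp only [axialSegment, ofPred_and, ofPred_forall]
  exact (isClosed_le (by fun_prop) continuous_const).inter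
    (isClosed_iInter fun i => isClosed_iInter fun _ => isClosed_eq (by fun_prop) continuous_const)

lemma convex_axialSegment : Convex ℝ (axialSegment i₀ r) := by
  rintro z ⟨hz, hz'⟩ w ⟨hw, hw'⟩ a b ha hb hab
  refine ⟨?_, fun i hi => by simp [hz' i hi, hw' i hi]⟩
  simp only [PiLp.add_apply, PiLp.smul_apply, smul_eq_mul]
  calc |a * z i₀ + b * w i₀| ≤ a * |z i₀| + b * |w i₀| :=
        (abs_add_le _ _).trans_eq (by rw [abs_mul, abs_mul, abs_of_nonneg ha, abs_of_nonneg hb])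
    _ ≤ a * (r / 2) + b * (r / 2) := by gcongr
    _ = r / 2 := by rw [← add_mul, hab, one_mul]

lemma volume_axialSegment {i₁ : Fin n} (h : i₁ ≠ i₀) : volume (axialSegment i₀ r) = 0 := by
  refine measure_mono_null (fun z hz => ?_) (Measure.addHaar_submodule volume
    (LinearMap.ker ((EuclideanSpace.proj i₁ : StrongDual ℝ (EuclideanSpace ℝ (Fin n))) :
      EuclideanSpace ℝ (Fin n) →ₗ[ℝ] ℝ)) fun htop => ?_)
  · exact LinearMap.mem_ker.2 (hz.2 i₁ h)
  · have := htop ▸ Submodule.mem_top (x := EuclideanSpace.single i₁ (1 : ℝ))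
    simp at this

lemma volume_setOf_infDist_axialSegment_le (hr : 0 ≤ r) {τ : ℝ} (hτ : 0 ≤ τ) :
    volume {x | infDist x (axialSegment i₀ r) ≤ τ}
      ≤ ENNReal.ofReal ((r + 2 * τ) * (2 * τ) ^ (n - 1)) := by
  set w : Fin n → ℝ := fun i => if i = i₀ then r / 2 + τ else τ
  have hsub : {x | infDist x (axialSegment i₀ r) ≤ τ} ⊆ WithLp.ofLp ⁻¹' Icc (-w) w := by
    intro x hx
    obtain ⟨p, ⟨hp, hp'⟩, hxp⟩ :=
      isClosed_axialSegment.exists_infDist_eq_dist ⟨0, zero_mem_axialSegment hr⟩ x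
    have hcoord : ∀ i, |x i - p i| ≤ τ := fun i =>
      (PiLp.dist_apply_le x p i).trans (hxp ▸ hx : dist x p ≤ τ)
    simp only [mem_preimage, mem_Icc, Pi.le_def, Pi.neg_apply, ← forall_and, ← abs_le]
    intro i
    by_cases hi : i = i₀
    · subst hi
      simp only [w, if_pos rfl]
      linarith [abs_sub_abs_le_abs_sub (x i) (p i), hcoord i]
    · simpa [w, hi, hp' i hi] using hcoord i
  calc volume {x | infDist x (axialSegment i₀ r) ≤ τ}
      ≤ volume (WithLp.ofLp ⁻¹' Icc (-w) w) := measure_mono hsub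
    _ = ENNReal.ofReal (∏ i, 2 * w i) := by
        rw [(PiLp.volume_preserving_ofLp _).measure_preimage measurableSet_Icc.nullMeasurableSet,
          Real.volume_Icc_pi,
          ENNReal.ofReal_prod_of_nonneg fun i _ => by simp only [w]; split_ifs <;> positivity]
        congr! 2 with i
        simp only [Pi.neg_apply, sub_neg_eq_add, two_mul]
    _ = ENNReal.ofReal ((r + 2 * τ) * (2 * τ) ^ (n - 1)) := by
        rw [← Finset.mul_prod_erase _ _ (Finset.mem_univ i₀),
          Finset.prod_congr rfl fun i hi =>
            show 2 * w i = 2 * τ by simp [w, Finset.ne_of_mem_erase hi],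
          Finset.prod_const, Finset.card_erase_of_mem (Finset.mem_univ _), Finset.card_univ,
          Fintype.card_fin]
        simp only [w, if_pos rfl]
        ring_nf

lemma volume_setOf_infDist_axialSegment_le_rpow (hr : 0 ≤ r) {τ : ℝ} (hτ : 0 ≤ τ) (hτr : τ ≤ r) :
    volume {x | infDist x (axialSegment i₀ r) ≤ τ}
      ≤ ENNReal.ofReal (3 * r * 2 ^ ((n : ℝ) - 1) * τ ^ ((n : ℝ) - 1)) := by
  refine (volume_setOf_infDist_axialSegment_le hr hτ).trans (ENNReal.ofReal_le_ofReal ?_)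
  rw [mul_assoc, ← Real.mul_rpow zero_le_two hτ,
    show (n : ℝ) - 1 = ((n - 1 : ℕ) : ℝ) by push_cast [Nat.one_le_of_lt i₀.pos]; ring,
    Real.rpow_natCast]
  gcongr; linarith

/-- Off the null set `J ∪ {d = r²} ∪ {d = r}` the gradient of the cut-off is either `0` or
`(d L)⁻¹` with `r² < d < r`. -/
theorem ae_enorm_logEnergy_fderiv_logCutoff_axialSegment_le {i₁ : Fin n} (h : i₁ ≠ i₀)
    {p : ℝ} (hp : p ≠ 0) (lam : ℝ) (hr : 0 < r) (hr2 : r < 1 / 2) :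
    ∀ᵐ x, ‖logEnergy p lam ‖fderiv ℝ (logCutoff (axialSegment i₀ r) (r ^ 2) r) x‖‖ₑ
      ≤ ENNReal.ofReal (4 ^ |lam| * Real.log (1 / r) ^ (lam - p))
        * {x | r ^ 2 < infDist x (axialSegment i₀ r) ∧ infDist x (axialSegment i₀ r) ≤ r}.indicator
            (fun x => ENNReal.ofReal (infDist x (axialSegment i₀ r) ^ p)⁻¹) x := by
  set J := axialSegment i₀ r
  have hrr : r ^ 2 < r := by nlinarith
  have hL : 0 < Real.log (1 / r) := by
    linarith [log_two_le_log_one_div hr hr2, Real.log_two_gt_d9]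
  have hℓ : Real.log (1 / r ^ 2) - Real.log (1 / r) = Real.log (1 / r) := by
    simp only [one_div, Real.log_inv, Real.log_pow]; push_cast; ring
  filter_upwards [measure_eq_zero_iff_ae_notMem.1 (volume_axialSegment h),
    measure_eq_zero_iff_ae_notMem.1 (convex_axialSegment.addHaar_setOf_infDist_eq volume
      (pow_pos hr 2)),
    measure_eq_zero_iff_ae_notMem.1 (convex_axialSegment.addHaar_setOf_infDist_eq volume hr)]
    with x hxJ hxa hxb
  have hx0 := (isClosed_axialSegment.notMem_iff_infDist_pos
    ⟨0, zero_mem_axialSegment hr.le⟩).1 hxJ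
  rw [Real.enorm_eq_ofReal (logEnergy_nonneg (norm_nonneg _))]
  refine (ENNReal.ofReal_le_ofReal (logEnergy_fderiv_logCutoff_le (pow_pos hr 2) hrr
    hp hx0 hxa hxb)).trans ?_
  by_cases hx : r ^ 2 < infDist x J ∧ infDist x J < r
  · rw [indicator_of_mem (show x ∈ {y | r ^ 2 < infDist y J ∧ infDist y J < r} from hx),
      indicator_of_mem (show x ∈ {y | r ^ 2 < infDist y J ∧ infDist y J ≤ r} from
        ⟨hx.1, hx.2.le⟩), ← ENNReal.ofReal_mul (by positivity), hℓ]
    exact ENNReal.ofReal_le_ofReal (logEnergy_inv_mul_log_le hr hr2 hx.1 hx.2)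
  · rw [indicator_of_notMem (show x ∉ {y | r ^ 2 < infDist y J ∧ infDist y J < r} from hx),
      ENNReal.ofReal_zero]
    exact bot_le

theorem integral_logEnergy_fderiv_logCutoff_axialSegment_le {i₁ : Fin n} (h : i₁ ≠ i₀)
    (lam : ℝ) (hr : 0 < r) (hr2 : r < 1 / 2) :
    ∫ x, logEnergy ((n : ℝ) - 1) lam ‖fderiv ℝ (logCutoff (axialSegment i₀ r) (r ^ 2) r) x‖
      ≤ 6 * 4 ^ |lam| * 4 ^ ((n : ℝ) - 1) / Real.log 2 * r
          * Real.log (1 / r) ^ (lam - ((n : ℝ) - 2)) := by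
  set J := axialSegment i₀ r
  set L := Real.log (1 / r)
  set p : ℝ := n - 1
  have hn : 2 ≤ n := by have := Fin.val_ne_of_ne h; omega
  have hp : 1 ≤ p := by
    have : (2 : ℝ) ≤ n := by exact_mod_cast hn
    simp only [p]; linarith
  have hL : 0 < L := by linarith [log_two_le_log_one_div hr hr2, Real.log_two_gt_d9]
  obtain ⟨N, hN, hNL⟩ := exists_two_pow_mul_sq_ge hr hr2
  set S := {x | r ^ 2 < infDist x J ∧ infDist x J ≤ r}
  have hS : MeasurableSet S :=
    (measurableSet_lt measurable_const (continuous_infDist_pt J).measurable).inter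
      (measurableSet_le (continuous_infDist_pt J).measurable measurable_const)
  have hconst : 4 ^ |lam| * L ^ (lam - p) * (N * 2 ^ p * (3 * r * 2 ^ p))
      ≤ 6 * 4 ^ |lam| * 4 ^ p / Real.log 2 * r * L ^ (lam - ((n : ℝ) - 2)) := by
    have h4 : (2 : ℝ) ^ p * 2 ^ p = 4 ^ p := by rw [← Real.mul_rpow] <;> norm_num
    rw [show lam - ((n : ℝ) - 2) = lam - p + 1 by ring, Real.rpow_add_one hL.ne']
    calc 4 ^ |lam| * L ^ (lam - p) * (N * 2 ^ p * (3 * r * 2 ^ p))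
        = 3 * 4 ^ |lam| * 4 ^ p * r * L ^ (lam - p) * N := by rw [← h4]; ring
      _ ≤ 3 * 4 ^ |lam| * 4 ^ p * r * L ^ (lam - p) * (2 * L / Real.log 2) := by gcongr
      _ = 6 * 4 ^ |lam| * 4 ^ p / Real.log 2 * r * (L ^ (lam - p) * L) := by ring
  refine integral_le_of_lintegral_enorm_le (by positivity) ?_
  calc ∫⁻ x, ‖logEnergy p lam ‖fderiv ℝ (logCutoff J (r ^ 2) r) x‖‖ₑ
      ≤ ∫⁻ x, ENNReal.ofReal (4 ^ |lam| * L ^ (lam - p))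
          * S.indicator (fun x => ENNReal.ofReal (infDist x J ^ p)⁻¹) x :=
        lintegral_mono_ae (ae_enorm_logEnergy_fderiv_logCutoff_axialSegment_le h (by linarith)
          lam hr hr2)
    _ = ENNReal.ofReal (4 ^ |lam| * L ^ (lam - p))
          * ∫⁻ x in S, ENNReal.ofReal (infDist x J ^ p)⁻¹ := by
        rw [lintegral_const_mul' _ _ ENNReal.ofReal_ne_top, lintegral_indicator hS]
    _ ≤ ENNReal.ofReal (4 ^ |lam| * L ^ (lam - p))
          * ENNReal.ofReal (N * 2 ^ p * (3 * r * 2 ^ p)) := by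
        gcongr
        exact setLIntegral_inv_rpow_le_of_measure_le (by linarith) (by positivity) (pow_pos hr 2)
          N r (fun τ hτ hτr => volume_setOf_infDist_axialSegment_le_rpow hr.le hτ.le hτr) hN
    _ ≤ _ := by
        rw [← ENNReal.ofReal_mul (by positivity)]
        exact ENNReal.ofReal_le_ofReal hconst

end axialSegment

/-- Energy estimate for the logarithmic cut-off around a segment `J` of length `r`
in `ℝⁿ` (case (ii) of Theorem 4.4): for
`u(x) = min(1, max(0, (log(1/d(x,J)) - log(1/r))/(log(1/r²) - log(1/r))))`, one has
`∫ |∇u|^{n-1} (log(e+|∇u|))^λ ≤ C r (log(1/r))^{λ-(n-2)}` with `C = C(n,λ)`. -/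
theorem thermos_energy_estimate (n : ℕ) (hn : 3 ≤ n) (lam : ℝ) :
    ∃ C > (0:ℝ), ∀ r : ℝ, 0 < r → r < 1/2 →
      ∫ x : EuclideanSpace ℝ (Fin n),
          ‖fderiv ℝ (fun y : EuclideanSpace ℝ (Fin n) =>
            min 1 (max 0
              ((Real.log (1 / Metric.infDist y
                  {z : EuclideanSpace ℝ (Fin n) |
                    |z ⟨0, by omega⟩| ≤ r/2 ∧ ∀ i, i ≠ ⟨0, by omega⟩ → z i = 0})
                - Real.log (1/r)) /
               (Real.log (1/r^2) - Real.log (1/r))))) x‖ ^ ((n:ℝ)-1) *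
          (Real.log (Real.exp 1 +
            ‖fderiv ℝ (fun y : EuclideanSpace ℝ (Fin n) =>
              min 1 (max 0
                ((Real.log (1 / Metric.infDist y
                    {z : EuclideanSpace ℝ (Fin n) |
                      |z ⟨0, by omega⟩| ≤ r/2 ∧ ∀ i, i ≠ ⟨0, by omega⟩ → z i = 0})
                  - Real.log (1/r)) /
                 (Real.log (1/r^2) - Real.log (1/r))))) x‖)) ^ lam
        ≤ C * r * (Real.log (1/r)) ^ (lam - ((n:ℝ)-2)) := by
  refine ⟨6 * 4 ^ |lam| * 4 ^ ((n : ℝ) - 1) / Real.log 2, by positivity, fun r hr hr2 => ?_⟩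
  exact integral_logEnergy_fderiv_logCutoff_axialSegment_le (i₀ := ⟨0, by omega⟩)
    (i₁ := ⟨1, by omega⟩) (by simp) lam hr hr2
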